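/- arXiv:1907.08912 — 3 statements merged into one kernel-verified Lean document; each statement's English description precedes it below -/
import Mathlib

section
/- (ε-approximate smoothness of the dual.) Let ε ≥ 0, let τ ∈ EuclideanSpace ℝ κ, and let y be an ε-equilibrium for toll τ. Then for every σ ∈ EuclideanSpace ℝ κ, L(y,τ) + ⟪A y − b, σ − τ⟫ − d(σ) ≤ (‖A‖²/α)·‖σ − τ‖² + 2ε. -/
open scoped RealInnerProductSpace

/-!
Strong convexity turns an `ε`-minimiser `y` of `L(·, τ)` into quadratic growth around `y`:
comparing with the midpoint of `y` and `z` gives `L(y, τ) + α/4 ‖z - y‖² ≤ L(z, τ) + 2ε`.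
Moving the toll from `τ` to `σ` changes `L(z, ·)` by `⟪A z - b, σ - τ⟫`, so for every `z ∈ Y`
the left-hand side with `d(σ)` replaced by `L(z, σ)` is at most
`2ε + ‖A‖ ‖σ - τ‖ t - α/4 t²` with `t = ‖z - y‖`, and maximising over `t` gives the bound.
-/

lemma mul_le_sq_div_add_mul_sq {a b c : ℝ} (hc : 0 < c) : a * b ≤ a ^ 2 / c + c / 4 * b ^ 2 := by
  have key : 0 ≤ (a - c * b / 2) ^ 2 / c := by positivity
  have expand : (a - c * b / 2) ^ 2 / c = a ^ 2 / c + c / 4 * b ^ 2 - a * b := by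
    field_simp
    ring
  linarith

lemma convexOn_inner_apply_sub {E F : Type*} [AddCommGroup E] [Module ℝ E]
    [NormedAddCommGroup F] [InnerProductSpace ℝ F] {s : Set E} (hs : Convex ℝ s)
    (A : E →ₗ[ℝ] F) (b τ : F) : ConvexOn ℝ s fun z ↦ ⟪τ, A z - b⟫ := by
  refine (((innerₛₗ ℝ τ).comp A).convexOn hs |>.add_const (-⟪τ, b⟫)).congr fun z _ ↦ ?_
  simp [inner_add_right, inner_neg_right, sub_eq_add_neg]

lemma ContinuousLinearMap.real_inner_apply_le {E F : Type*} [SeminormedAddCommGroup E]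
    [NormedSpace ℝ E] [NormedAddCommGroup F] [InnerProductSpace ℝ F] (A : E →L[ℝ] F) (x : E)
    (v : F) : ⟪A x, v⟫ ≤ ‖A‖ * ‖x‖ * ‖v‖ :=
  calc ⟪A x, v⟫ ≤ ‖A x‖ * ‖v‖ := real_inner_le_norm _ _
    _ ≤ ‖A‖ * ‖x‖ * ‖v‖ := by gcongr; exact A.le_opNorm x

section StrongConvexOn

variable {E : Type*} [NormedAddCommGroup E] [NormedSpace ℝ E] {s : Set E} {m : ℝ} {f : E → ℝ}

lemma StrongConvexOn.add_convexOn {g : E → ℝ} (hf : StrongConvexOn s m f)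
    (hg : ConvexOn ℝ s g) : StrongConvexOn s m (f + g) := by
  have h := hf.add (uniformConvexOn_zero.2 hg)
  rwa [add_zero] at h

lemma StrongConvexOn.add_sq_norm_sub_le_add {x z : E} {ε : ℝ} (hf : StrongConvexOn s m f)
    (hx : x ∈ s) (hz : z ∈ s) (hxε : ∀ w ∈ s, f x ≤ f w + ε) :
    f x + m / 4 * ‖z - x‖ ^ 2 ≤ f z + 2 * ε := by
  have hhalf : (0 : ℝ) ≤ 1 / 2 := by norm_num
  have hmid := hf.2 hx hz hhalf hhalf (by norm_num)
  have hmin := hxε _ (hf.1 hx hz hhalf hhalf (by norm_num))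
  rw [norm_sub_rev] at hmid
  simp only [smul_eq_mul] at hmid
  linarith

end StrongConvexOn

theorem stmt_4_general
    {ι κ : Type*} [Fintype ι] [Fintype κ]
    (Y : Set (EuclideanSpace ℝ ι)) (hYcpt : IsCompact Y)
    (α : ℝ) (hα : 0 < α)
    (F₀ : EuclideanSpace ℝ ι → ℝ) (hF₀cont : Continuous F₀)
    (hF₀sc : StrongConvexOn Y α F₀)
    (A : EuclideanSpace ℝ ι →L[ℝ] EuclideanSpace ℝ κ) (b : EuclideanSpace ℝ κ)
    (L : EuclideanSpace ℝ ι → EuclideanSpace ℝ κ → ℝ)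
    (hL : ∀ y τ, L y τ = F₀ y + ⟪τ, A y - b⟫)
    (d : EuclideanSpace ℝ κ → ℝ)
    (hd : ∀ τ, d τ = sInf ((fun y => L y τ) '' Y))
    :
    ∀ ε : ℝ, 0 ≤ ε → ∀ τ : EuclideanSpace ℝ κ, ∀ y ∈ Y, L y τ ≤ d τ + ε →
      ∀ σ : EuclideanSpace ℝ κ,
        L y τ + ⟪A y - b, σ - τ⟫ - d σ ≤ ‖A‖ ^ 2 / α * ‖σ - τ‖ ^ 2 + 2 * ε := by
  intro ε _ τ y hy hyε σ
  have hLτ : StrongConvexOn Y α fun z ↦ L z τ := by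
    rw [show (fun z ↦ L z τ) = F₀ + fun z ↦ ⟪τ, A z - b⟫ from funext (hL · τ)]
    exact hF₀sc.add_convexOn (convexOn_inner_apply_sub hF₀sc.1 A.toLinearMap b τ)
  have hbdd : BddBelow ((fun z ↦ L z τ) '' Y) :=
    hYcpt.bddBelow_image (by simp only [hL]; fun_prop)
  have hy_approx : ∀ w ∈ Y, L y τ ≤ L w τ + ε := by
    intro w hw
    rw [hd] at hyε
    linarith [csInf_le hbdd ⟨w, hw, rfl⟩]
  suffices ∀ z ∈ Y, L y τ + ⟪A y - b, σ - τ⟫ - (‖A‖ ^ 2 / α * ‖σ - τ‖ ^ 2 + 2 * ε) ≤ L z σ by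
    have := le_csInf (Set.nonempty_of_mem hy |>.image _) (Set.forall_mem_image.2 this)
    rw [hd]
    linarith
  intro z hz
  have hshift : L z σ = L z τ + ⟪A z - b, σ - τ⟫ := by
    rw [hL, hL, real_inner_comm (σ - τ), inner_sub_left]
    ring
  have hpair : ⟪A y - b, σ - τ⟫ - ⟪A z - b, σ - τ⟫ ≤ ‖A‖ * ‖σ - τ‖ * ‖z - y‖ := by
    rw [← inner_sub_left, sub_sub_sub_cancel_right, ← map_sub, norm_sub_rev z, mul_right_comm]
    exact A.real_inner_apply_le (y - z) (σ - τ)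
  have hyoung := mul_le_sq_div_add_mul_sq (a := ‖A‖ * ‖σ - τ‖) (b := ‖z - y‖) hα
  rw [mul_pow, mul_div_right_comm] at hyoung
  linarith [hLτ.add_sq_norm_sub_le_add hy hz hy_approx]

theorem stmt_4
    {ι κ : Type*} [Fintype ι] [Fintype κ] [Nonempty ι] [Nonempty κ]
    (Y : Set (EuclideanSpace ℝ ι)) (hYne : Y.Nonempty) (hYcpt : IsCompact Y)
    (hYconv : Convex ℝ Y)
    (α : ℝ) (hα : 0 < α)
    (F₀ : EuclideanSpace ℝ ι → ℝ) (hF₀cont : Continuous F₀)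
    (hF₀sc : StrongConvexOn Y α F₀)
    (A : EuclideanSpace ℝ ι →L[ℝ] EuclideanSpace ℝ κ) (b : EuclideanSpace ℝ κ)
    (L : EuclideanSpace ℝ ι → EuclideanSpace ℝ κ → ℝ)
    (hL : ∀ y τ, L y τ = F₀ y + ⟪τ, A y - b⟫)
    (d : EuclideanSpace ℝ κ → ℝ)
    (hd : ∀ τ, d τ = sInf ((fun y => L y τ) '' Y))
    :
    ∀ ε : ℝ, 0 ≤ ε → ∀ τ : EuclideanSpace ℝ κ, ∀ y ∈ Y, L y τ ≤ d τ + ε →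
      ∀ σ : EuclideanSpace ℝ κ,
        L y τ + ⟪A y - b, σ - τ⟫ - d σ ≤ ‖A‖ ^ 2 / α * ‖σ - τ‖ ^ 2 + 2 * ε :=
  stmt_4_general Y hYcpt α hα F₀ hF₀cont hF₀sc A b L hL d hd
end

section
/- (Convergence of the average toll.) If 2γ‖A‖² ≤ α, then for every k ≥ 1 the average toll τ̄^k = (1/k)∑_{s=1}^k τ^s satisfies d(τ⋆) − d(τ̄^k) ≤ (1/k)·( (1/(2γ))·‖τ⁰ − τ⋆‖² + 2·E^k ), where E^k = ∑_{s=0}^{k-1} ε^s. -/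
open scoped RealInnerProductSpace

/-!
The dual function `d` is concave, as an infimum of affine functions, and strong convexity of the
potential makes it smooth with constant `‖A‖² / α`, with gradient `A ŷ(τ) - b` at the exact
equilibrium `ŷ(τ)`. An `ε`-equilibrium `y` lies within `√(2ε / α)` of `ŷ(τ)`, so `A y - b` is an
inexact gradient whose error costs `ε`. The toll update is a projected gradient ascent step onto
the nonnegative orthant, and the three-point inequality of the projection with step
`γ ≤ α / (2‖A‖²)` gives `d τ⋆ - d τˢ⁺¹ ≤ 2 εˢ + (‖τˢ - τ⋆‖² - ‖τˢ⁺¹ - τ⋆‖²) / (2γ)`.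
Summing telescopes, and concavity of `d` passes from the average of the values to the value
at the average toll.
-/

open Set Finset

lemma mul_le_half_mul_sq_add_sq_div {a b c : ℝ} (hc : 0 < c) :
    a * b ≤ c / 2 * a ^ 2 + b ^ 2 / (2 * c) := by
  rw [div_mul_eq_mul_div, div_add_div _ _ two_ne_zero (by positivity), le_div_iff₀ (by positivity)]
  nlinarith [sq_nonneg (c * a - b)]

lemma sum_range_le_of_le_add_mul_sub_succ {a c e : ℕ → ℝ} {D : ℝ} (hD : 0 ≤ D)
    (he : ∀ s, 0 ≤ e s) (h : ∀ s, a s ≤ c s + D * (e s - e (s + 1))) (k : ℕ) :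
    ∑ s ∈ range k, a s ≤ ∑ s ∈ range k, c s + D * e 0 := by
  calc ∑ s ∈ range k, a s ≤ ∑ s ∈ range k, (c s + D * (e s - e (s + 1))) :=
        sum_le_sum fun s _ => h s
    _ = ∑ s ∈ range k, c s + D * (e 0 - e k) := by
      rw [sum_add_distrib, ← mul_sum, sum_range_sub']
    _ ≤ ∑ s ∈ range k, c s + D * e 0 := by nlinarith [he k]

lemma StrongConvexOn.add_mul_sq_norm_sub_le_of_isMinOn {E : Type*} [NormedAddCommGroup E]
    [NormedSpace ℝ E] {s : Set E} {m : ℝ} {f : E → ℝ} (hf : StrongConvexOn s m f) {x y : E}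
    (hx : x ∈ s) (hmin : IsMinOn f s x) (hy : y ∈ s) :
    f x + m / 2 * ‖y - x‖ ^ 2 ≤ f y := by
  have hIoo : Ioo (0 : ℝ) 1 ⊆ {t | f x + (1 - t) * (m / 2 * ‖y - x‖ ^ 2) ≤ f y} := by
    rintro t ⟨ht0, ht1⟩
    have hconv := hf.2 hy hx ht0.le (sub_nonneg.2 ht1.le) (add_sub_cancel t 1)
    have hle := isMinOn_iff.1 hmin _ (hf.1 hy hx ht0.le (sub_nonneg.2 ht1.le) (add_sub_cancel t 1))
    simp only [smul_eq_mul] at hconv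
    exact le_of_mul_le_mul_left (by linear_combination hle.trans hconv) ht0
  have hclosed : IsClosed {t : ℝ | f x + (1 - t) * (m / 2 * ‖y - x‖ ^ 2) ≤ f y} :=
    isClosed_le (by fun_prop) continuous_const
  have h0 : (0 : ℝ) ∈ closure (Ioo 0 1) := by
    rw [closure_Ioo zero_ne_one]
    exact left_mem_Icc.2 zero_le_one
  simpa using hclosed.closure_subset_iff.2 hIoo h0

lemma EuclideanSpace.inner_sub_sub_nonpos_of_posPart {κ : Type*} [Fintype κ]
    {v p σ : EuclideanSpace ℝ κ} (hp : ∀ i, p i = max (v i) 0) (hσ : ∀ i, 0 ≤ σ i) :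
    ⟪v - p, σ - p⟫ ≤ 0 := by
  rw [PiLp.inner_apply]
  refine sum_nonpos fun i _ => ?_
  simp only [PiLp.sub_apply, RCLike.inner_apply, conj_trivial, hp i]
  rcases le_or_gt 0 (v i) with h | h
  · simp [max_eq_left h]
  · rw [max_eq_right h.le, sub_zero, sub_zero]
    exact mul_nonpos_of_nonneg_of_nonpos (hσ i) h.le

lemma mul_inner_sub_le_of_inner_add_smul_sub_nonpos {F : Type*} [NormedAddCommGroup F]
    [InnerProductSpace ℝ F] {τ τ' σ g : F} {γ : ℝ}
    (hproj : ⟪τ + γ • g - τ', σ - τ'⟫ ≤ 0) :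
    γ * ⟪g, σ - τ'⟫ ≤ (‖τ - σ‖ ^ 2 - ‖τ' - τ‖ ^ 2 - ‖τ' - σ‖ ^ 2) / 2 := by
  have hsq := norm_sub_sq_real (τ - τ') (σ - τ')
  rw [sub_sub_sub_cancel_right, norm_sub_rev τ τ', norm_sub_rev σ τ'] at hsq
  rw [add_sub_right_comm, inner_add_left, real_inner_smul_left] at hproj
  linarith

section LagrangianDuality

variable {E F : Type*} [NormedAddCommGroup E] [NormedSpace ℝ E]
  [NormedAddCommGroup F] [InnerProductSpace ℝ F]

def lagrangian (f : E → ℝ) (A : E →L[ℝ] F) (b : F) (y : E) (τ : F) : ℝ :=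
  f y + ⟪τ, A y - b⟫

noncomputable def dualFunction (Y : Set E) (f : E → ℝ) (A : E →L[ℝ] F) (b : F) (τ : F) : ℝ :=
  sInf ((fun y => lagrangian f A b y τ) '' Y)

variable {Y : Set E} {f : E → ℝ} {A : E →L[ℝ] F} {b : F}

lemma lagrangian_eq_add_inner (y : E) (σ τ : F) :
    lagrangian f A b y σ = lagrangian f A b y τ + ⟪σ - τ, A y - b⟫ := by
  simp only [lagrangian, inner_sub_left]
  ring

lemma continuous_lagrangian (hf : Continuous f) (τ : F) :
    Continuous fun y => lagrangian f A b y τ := by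
  unfold lagrangian
  fun_prop

lemma strongConvexOn_lagrangian {α : ℝ} (hf : StrongConvexOn Y α f) (τ : F) :
    StrongConvexOn Y α fun y => lagrangian f A b y τ := by
  have haffine : ConvexOn ℝ Y fun y => ⟪τ, A y - b⟫ := by
    refine ⟨hf.1, fun y _ z _ a c _ _ hac => le_of_eq ?_⟩
    simp only [map_add, map_smul, smul_eq_mul, inner_sub_right, inner_add_right,
      real_inner_smul_right]
    linear_combination ⟪τ, b⟫ * hac
  have := hf.add (uniformConvexOn_zero.2 haffine)
  rwa [add_zero] at this

lemma exists_isMinOn_lagrangian (hY : IsCompact Y) (hne : Y.Nonempty) (hf : Continuous f)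
    (τ : F) : ∃ x ∈ Y, IsMinOn (fun y => lagrangian f A b y τ) Y x :=
  hY.exists_isMinOn hne (continuous_lagrangian hf τ).continuousOn

lemma dualFunction_le_lagrangian (hY : IsCompact Y) (hf : Continuous f) {y : E} (hy : y ∈ Y)
    (τ : F) : dualFunction Y f A b τ ≤ lagrangian f A b y τ :=
  csInf_le (hY.bddBelow_image (continuous_lagrangian hf τ).continuousOn) (mem_image_of_mem _ hy)

lemma dualFunction_eq_of_isMinOn {τ : F} {x : E} (hx : x ∈ Y)
    (hmin : IsMinOn (fun y => lagrangian f A b y τ) Y x) :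
    dualFunction Y f A b τ = lagrangian f A b x τ :=
  IsLeast.csInf_eq ⟨mem_image_of_mem _ hx, forall_mem_image.2 (isMinOn_iff.1 hmin)⟩

lemma concaveOn_dualFunction (hY : IsCompact Y) (hne : Y.Nonempty) (hf : Continuous f) :
    ConcaveOn ℝ univ (dualFunction Y f A b) := by
  refine ⟨convex_univ, fun σ _ τ _ a c ha hc hac => le_csInf (hne.image _) ?_⟩
  rintro _ ⟨z, hz, rfl⟩
  show _ ≤ lagrangian f A b z (a • σ + c • τ)
  have hlin : lagrangian f A b z (a • σ + c • τ) =
      a * lagrangian f A b z σ + c * lagrangian f A b z τ := by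
    simp only [lagrangian, inner_add_left, real_inner_smul_left]
    linear_combination (-f z) * hac
  rw [smul_eq_mul, smul_eq_mul, hlin]
  gcongr
  · exact dualFunction_le_lagrangian hY hf hz σ
  · exact dualFunction_le_lagrangian hY hf hz τ

lemma le_dualFunction_of_isMinOn (hne : Y.Nonempty) {α : ℝ} (hα : 0 < α)
    (hf : StrongConvexOn Y α f) {τ : F} {x : E} (hx : x ∈ Y)
    (hmin : IsMinOn (fun y => lagrangian f A b y τ) Y x) (σ : F) :
    dualFunction Y f A b τ + ⟪A x - b, σ - τ⟫ - ‖A‖ ^ 2 / (2 * α) * ‖σ - τ‖ ^ 2 ≤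
      dualFunction Y f A b σ := by
  refine le_csInf (hne.image _) ?_
  rintro _ ⟨z, hz, rfl⟩
  have hgrowth : dualFunction Y f A b τ + α / 2 * ‖z - x‖ ^ 2 ≤ lagrangian f A b z τ := by
    rw [dualFunction_eq_of_isMinOn hx hmin]
    exact (strongConvexOn_lagrangian hf τ).add_mul_sq_norm_sub_le_of_isMinOn hx hmin hz
  have hsplit : lagrangian f A b z σ =
      lagrangian f A b z τ + ⟪A x - b, σ - τ⟫ + ⟪σ - τ, A (z - x)⟫ := by
    rw [lagrangian_eq_add_inner z σ τ, add_assoc, ← real_inner_comm (A x - b), ← inner_add_right,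
      map_sub]
    congr 2
    abel
  have hcs : -(‖z - x‖ * (‖A‖ * ‖σ - τ‖)) ≤ ⟪σ - τ, A (z - x)⟫ := by
    have := (abs_real_inner_le_norm (σ - τ) (A (z - x))).trans
      (mul_le_mul_of_nonneg_left (A.le_opNorm (z - x)) (norm_nonneg _))
    linarith [neg_abs_le ⟪σ - τ, A (z - x)⟫]
  have hyoung := mul_le_half_mul_sq_add_sq_div (a := ‖z - x‖) (b := ‖A‖ * ‖σ - τ‖) hα
  rw [mul_pow] at hyoung
  show _ ≤ lagrangian f A b z σ
  rw [hsplit, div_mul_eq_mul_div]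
  linarith

lemma mul_sq_norm_sub_le_of_lagrangian_le {α ε : ℝ} (hf : StrongConvexOn Y α f) {τ : F} {x y : E}
    (hx : x ∈ Y) (hmin : IsMinOn (fun y => lagrangian f A b y τ) Y x) (hy : y ∈ Y)
    (hyε : lagrangian f A b y τ ≤ dualFunction Y f A b τ + ε) :
    α / 2 * ‖y - x‖ ^ 2 ≤ ε := by
  have := (strongConvexOn_lagrangian hf τ).add_mul_sq_norm_sub_le_of_isMinOn hx hmin hy
  rw [← dualFunction_eq_of_isMinOn hx hmin] at this
  linarith

/-- `hproj` is the variational inequality characterizing `τ'` as the projection of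
`τ + γ • (A y - b)` onto a convex set containing `τstar`. -/
lemma dualFunction_sub_le_of_projected_step (hY : IsCompact Y) (hne : Y.Nonempty)
    (hfc : Continuous f) {α γ : ℝ} (hα : 0 < α) (hf : StrongConvexOn Y α f) (hγ : 0 < γ)
    (hstep : 2 * γ * ‖A‖ ^ 2 ≤ α) {τ τ' τstar : F} {y : E} {ε : ℝ} (hy : y ∈ Y)
    (hyε : lagrangian f A b y τ ≤ dualFunction Y f A b τ + ε)
    (hproj : ⟪τ + γ • (A y - b) - τ', τstar - τ'⟫ ≤ 0) :
    dualFunction Y f A b τstar - dualFunction Y f A b τ' ≤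
      2 * ε + 1 / (2 * γ) * (‖τ - τstar‖ ^ 2 - ‖τ' - τstar‖ ^ 2) := by
  obtain ⟨x, hx, hmin⟩ := exists_isMinOn_lagrangian hY hne hfc (A := A) (b := b) τ
  set d := dualFunction Y f A b
  set g := A y - b
  set ĝ := A x - b
  have hupper : d τstar ≤ d τ + ε + ⟪g, τstar - τ⟫ := by
    have : d τstar ≤ lagrangian f A b y τstar := dualFunction_le_lagrangian hY hfc hy τstar
    rw [lagrangian_eq_add_inner y τstar τ, real_inner_comm] at this
    linarith
  have hlower : d τ + ⟪ĝ, τ' - τ⟫ - ‖A‖ ^ 2 / (2 * α) * ‖τ' - τ‖ ^ 2 ≤ d τ' :=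
    le_dualFunction_of_isMinOn hne hα hf hx hmin τ'
  have hcurv : ‖A‖ ^ 2 / (2 * α) * ‖τ' - τ‖ ^ 2 ≤ ‖τ' - τ‖ ^ 2 / (4 * γ) := by
    rw [div_mul_eq_mul_div, div_le_div_iff₀ (by positivity) (by positivity)]
    nlinarith [sq_nonneg ‖τ' - τ‖]
  have herr : γ * ‖g - ĝ‖ ^ 2 ≤ ε := by
    have hA : ‖g - ĝ‖ ≤ ‖A‖ * ‖y - x‖ := by
      rw [show g - ĝ = A (y - x) by simp only [g, ĝ, map_sub]; abel]
      exact A.le_opNorm _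
    calc γ * ‖g - ĝ‖ ^ 2 ≤ γ * ‖A‖ ^ 2 * ‖y - x‖ ^ 2 := by
          rw [mul_assoc, ← mul_pow]; gcongr
      _ ≤ α / 2 * ‖y - x‖ ^ 2 := by gcongr; linarith
      _ ≤ ε := mul_sq_norm_sub_le_of_lagrangian_le hf hx hmin hy hyε
  have hyoung : ⟪g - ĝ, τ' - τ⟫ ≤ γ * ‖g - ĝ‖ ^ 2 + ‖τ' - τ‖ ^ 2 / (4 * γ) := by
    have := mul_le_half_mul_sq_add_sq_div (a := ‖g - ĝ‖) (b := ‖τ' - τ‖)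
      (c := 2 * γ) (by positivity)
    rw [mul_div_cancel_left₀ γ two_ne_zero, ← mul_assoc, show (2 : ℝ) * 2 = 4 by norm_num] at this
    exact (real_inner_le_norm _ _).trans this
  have hthree : ⟪g, τstar - τ'⟫ ≤
      (‖τ - τstar‖ ^ 2 - ‖τ' - τ‖ ^ 2 - ‖τ' - τstar‖ ^ 2) / (2 * γ) := by
    rw [le_div_iff₀ (by positivity), mul_comm, mul_assoc]
    linarith [mul_inner_sub_le_of_inner_add_smul_sub_nonpos hproj]
  have hsplit₁ : ⟪g, τstar - τ⟫ = ⟪g, τstar - τ'⟫ + ⟪g, τ' - τ⟫ := by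
    rw [← inner_add_right, sub_add_sub_cancel]
  have hsplit₂ : ⟪g - ĝ, τ' - τ⟫ = ⟪g, τ' - τ⟫ - ⟪ĝ, τ' - τ⟫ := inner_sub_left _ _ _
  have hscale : ‖τ' - τ‖ ^ 2 / (4 * γ) = ‖τ' - τ‖ ^ 2 / (2 * γ) / 2 := by
    rw [div_div, mul_comm _ (2 : ℝ), ← mul_assoc]; norm_num
  rw [sub_div, sub_div] at hthree
  rw [one_div_mul_eq_div, sub_div]
  linarith

end LagrangianDuality

theorem stmt_7_general
    {ι κ : Type*} [Fintype ι] [Fintype κ]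
    (Y : Set (EuclideanSpace ℝ ι)) (hYne : Y.Nonempty) (hYcpt : IsCompact Y)
    (α : ℝ) (hα : 0 < α)
    (F₀ : EuclideanSpace ℝ ι → ℝ) (hF₀cont : Continuous F₀)
    (hF₀sc : StrongConvexOn Y α F₀)
    (A : EuclideanSpace ℝ ι →L[ℝ] EuclideanSpace ℝ κ) (b : EuclideanSpace ℝ κ)
    (L : EuclideanSpace ℝ ι → EuclideanSpace ℝ κ → ℝ)
    (hL : ∀ y τ, L y τ = F₀ y + ⟪τ, A y - b⟫)
    (d : EuclideanSpace ℝ κ → ℝ)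
    (hd : ∀ τ, d τ = sInf ((fun y => L y τ) '' Y))
    (γ : ℝ) (hγ : 0 < γ)
    (τs : ℕ → EuclideanSpace ℝ κ) (ys : ℕ → EuclideanSpace ℝ ι) (εs : ℕ → ℝ)
    (hysY : ∀ s, ys s ∈ Y)
    (hyseq : ∀ s, L (ys s) (τs s) ≤ d (τs s) + εs s)
    (hupdate : ∀ s i, τs (s + 1) i = max (τs s i + γ * (A (ys s) - b) i) 0)
    (τstar : EuclideanSpace ℝ κ) (hτstarpos : ∀ i, 0 ≤ τstar i)
    (hstep : 2 * γ * ‖A‖ ^ 2 ≤ α)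
    :
    ∀ k : ℕ, 1 ≤ k →
      d τstar - d ((k : ℝ)⁻¹ • ∑ s ∈ Finset.Icc 1 k, τs s) ≤
        (1 / (k : ℝ)) * (1 / (2 * γ) * ‖τs 0 - τstar‖ ^ 2 + 2 * ∑ s ∈ Finset.range k, εs s) := by
  obtain rfl : L = lagrangian F₀ A b := funext₂ hL
  obtain rfl : d = dualFunction Y F₀ A b := funext hd
  set d := dualFunction Y F₀ A b
  intro k hk
  have hdescent (s : ℕ) : d τstar - d (τs (s + 1)) ≤
      2 * εs s + 1 / (2 * γ) * (‖τs s - τstar‖ ^ 2 - ‖τs (s + 1) - τstar‖ ^ 2) :=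
    dualFunction_sub_le_of_projected_step hYcpt hYne hF₀cont hα hF₀sc hγ hstep (hysY s) (hyseq s)
      (EuclideanSpace.inner_sub_sub_nonpos_of_posPart (p := τs (s + 1))
        (fun i => by simp [hupdate]) hτstarpos)
  have htelescope := sum_range_le_of_le_add_mul_sub_succ (by positivity) (fun _ => sq_nonneg _)
    hdescent k
  have hk₀ : (0 : ℝ) < k := by exact_mod_cast hk
  have hjensen : (k : ℝ)⁻¹ * ∑ s ∈ range k, d (τs (s + 1)) ≤
      d ((k : ℝ)⁻¹ • ∑ s ∈ Icc 1 k, τs s) := by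
    have := (concaveOn_dualFunction hYcpt hYne hF₀cont (A := A) (b := b)).le_map_centerMass
      (t := Icc 1 k) (w := fun _ => 1) (p := τs) (fun _ _ => zero_le_one) (by simpa) (by simp)
    rw [range_eq_Ico, sum_Ico_add' (fun s => d (τs s)), zero_add, Finset.Ico_add_one_right_eq_Icc]
    simpa [Finset.centerMass] using this
  calc d τstar - d ((k : ℝ)⁻¹ • ∑ s ∈ Icc 1 k, τs s)
      ≤ (k : ℝ)⁻¹ * ∑ s ∈ range k, (d τstar - d (τs (s + 1))) := by
        rw [sum_sub_distrib, sum_const, card_range, nsmul_eq_mul, mul_sub,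
          inv_mul_cancel_left₀ hk₀.ne']
        linarith
    _ ≤ (k : ℝ)⁻¹ * (∑ s ∈ range k, 2 * εs s + 1 / (2 * γ) * ‖τs 0 - τstar‖ ^ 2) := by gcongr
    _ = _ := by rw [← mul_sum]; ring

theorem stmt_7
    {ι κ : Type*} [Fintype ι] [Fintype κ] [Nonempty ι] [Nonempty κ]
    (Y : Set (EuclideanSpace ℝ ι)) (hYne : Y.Nonempty) (hYcpt : IsCompact Y)
    (hYconv : Convex ℝ Y)
    (α : ℝ) (hα : 0 < α)
    (F₀ : EuclideanSpace ℝ ι → ℝ) (hF₀cont : Continuous F₀)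
    (hF₀sc : StrongConvexOn Y α F₀)
    (A : EuclideanSpace ℝ ι →L[ℝ] EuclideanSpace ℝ κ) (b : EuclideanSpace ℝ κ)
    (L : EuclideanSpace ℝ ι → EuclideanSpace ℝ κ → ℝ)
    (hL : ∀ y τ, L y τ = F₀ y + ⟪τ, A y - b⟫)
    (d : EuclideanSpace ℝ κ → ℝ)
    (hd : ∀ τ, d τ = sInf ((fun y => L y τ) '' Y))
    (γ : ℝ) (hγ : 0 < γ)
    (τs : ℕ → EuclideanSpace ℝ κ) (ys : ℕ → EuclideanSpace ℝ ι) (εs : ℕ → ℝ)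
    (hτ0 : ∀ i, 0 ≤ τs 0 i)
    (hεs : ∀ s, 0 ≤ εs s)
    (hysY : ∀ s, ys s ∈ Y)
    (hyseq : ∀ s, L (ys s) (τs s) ≤ d (τs s) + εs s)
    (hupdate : ∀ s i, τs (s + 1) i = max (τs s i + γ * (A (ys s) - b) i) 0)
    (τstar : EuclideanSpace ℝ κ) (hτstarpos : ∀ i, 0 ≤ τstar i)
    (hτstarmax : ∀ σ : EuclideanSpace ℝ κ, (∀ i, 0 ≤ σ i) → d σ ≤ d τstar)
    (hstep : 2 * γ * ‖A‖ ^ 2 ≤ α)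
    :
    ∀ k : ℕ, 1 ≤ k →
      d τstar - d ((k : ℝ)⁻¹ • ∑ s ∈ Finset.Icc 1 k, τs s) ≤
        (1 / (k : ℝ)) * (1 / (2 * γ) * ‖τs 0 - τstar‖ ^ 2 + 2 * ∑ s ∈ Finset.range k, εs s) :=
  stmt_7_general Y hYne hYcpt α hα F₀ hF₀cont hF₀sc A b L hL d hd γ hγ τs ys εs hysY hyseq hupdate
    τstar hτstarpos hstep
end

section
/- (MDP Wardrop equilibria of potential games minimize the potential.) Let F : (Fin (T+1) → Fin S → Fin A → ℝ) → ℝ be convex and differentiable, with the partial derivative of F with respect to the coordinate (t,s,a) at every point y equal to ℓ t s a (y). If y⋆ ∈ Y(P,p) is an MDP Wardrop equilibrium, then y⋆ minimizes F over Y(P,p): F(y⋆) ≤ F(y) for every y ∈ Y(P,p). -/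
/-- The feasible set of population distributions for transition kernel `P`
and initial distribution `p`. -/
def feasibleY {T S A : ℕ}
    (P : Fin T → Fin S → Fin S → Fin A → ℝ) (p : Fin S → ℝ) :
    Set (Fin (T + 1) → Fin S → Fin A → ℝ) :=
  {y | (∀ t s a, 0 ≤ y t s a) ∧
       (∀ s, ∑ a, y 0 s a = p s) ∧
       (∀ (t : Fin T) (s : Fin S),
          ∑ a, y t.succ s a = ∑ s', ∑ a, P t s s' a * y t.castSucc s' a)}

/-- Auxiliary Q-value function, indexed by "time remaining" `j` (so `j = 0`
corresponds to the final time `T`, and `j` corresponds to time `T - j`). -/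
noncomputable def Qaux {T S A : ℕ}
    (P : Fin T → Fin S → Fin S → Fin A → ℝ)
    (ℓ : Fin (T + 1) → Fin S → Fin A → ((Fin (T + 1) → Fin S → Fin A → ℝ) → ℝ)) :
    (j : ℕ) → j ≤ T → Fin S → Fin A → (Fin (T + 1) → Fin S → Fin A → ℝ) → ℝ
  | 0, _, s, a, y => ℓ (Fin.last T) s a y
  | (j + 1), h, s, a, y =>
      ℓ ⟨T - (j + 1), by omega⟩ s a y +
        ∑ s' : Fin S, P ⟨T - (j + 1), by omega⟩ s' s a *
          ⨅ a' : Fin A, Qaux P ℓ j (by omega) s' a' y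

/-- The Q-value function of the MDP congestion game, defined by backward
recursion: `Q T s a y = ℓ T s a y` and for `t < T`,
`Q t s a y = ℓ t s a y + ∑ s', P t s' s a * min_{a'} Q (t+1) s' a' y`. -/
noncomputable def Qval {T S A : ℕ}
    (P : Fin T → Fin S → Fin S → Fin A → ℝ)
    (ℓ : Fin (T + 1) → Fin S → Fin A → ((Fin (T + 1) → Fin S → Fin A → ℝ) → ℝ)) :
    Fin (T + 1) → Fin S → Fin A → (Fin (T + 1) → Fin S → Fin A → ℝ) → ℝ :=
  fun t => Qaux P ℓ (T - t.val) (Nat.sub_le T t.val)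

/-!
Write `Q⋆ = Q(y⋆)` and `V⋆ t s = min_a Q⋆ t s a`. Pairing the Bellman recursion for `Q⋆` with the
flow-conservation constraints of a feasible `y` telescopes in time:
`⟨ℓ(y⋆), y⟩ = ∑ (Q⋆ - V⋆) · y + ⟨V⋆ 0, p⟩`. The first term is nonnegative, and it vanishes at
`y = y⋆` because an equilibrium only puts mass on minimizing actions. Hence
`⟨∇F(y⋆), y - y⋆⟩ = ⟨ℓ(y⋆), y - y⋆⟩ ≥ 0`, and the first-order characterization of convexity gives
`F y⋆ ≤ F y`.
-/

open Finset

theorem ConvexOn.add_apply_sub_le_of_hasFDerivAt {E : Type*} [NormedAddCommGroup E]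
    [NormedSpace ℝ E] {F : E → ℝ} {F' : E →L[ℝ] ℝ} {x : E}
    (hF : ConvexOn ℝ Set.univ F) (hx : HasFDerivAt F F' x) (y : E) :
    F x + F' (y - x) ≤ F y := by
  have hline : ConvexOn ℝ Set.univ (F ∘ AffineMap.lineMap (k := ℝ) x y) :=
    hF.comp_affineMap _
  have hderiv : HasDerivAt (F ∘ AffineMap.lineMap (k := ℝ) x y) (F' (y - x)) 0 := by
    refine HasFDerivAt.comp_hasDerivAt (0 : ℝ) ?_ AffineMap.hasDerivAt_lineMap
    simpa using hx
  have hslope := hline.le_slope_of_hasDerivAt (Set.mem_univ 0) (Set.mem_univ 1) one_pos hderiv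
  simpa [slope_def_field, map_sub, le_sub_iff_add_le'] using hslope

theorem LinearMap.pi_pi_pi_apply_eq_sum_univ {R M ι κ μ : Type*} [CommSemiring R]
    [AddCommMonoid M] [Module R M] [Fintype ι] [Fintype κ] [Fintype μ]
    [DecidableEq ι] [DecidableEq κ] [DecidableEq μ]
    (f : (ι → κ → μ → R) →ₗ[R] M) (v : ι → κ → μ → R) :
    f v = ∑ t, ∑ s, ∑ a, v t s a • f (Pi.single t (Pi.single s (Pi.single a 1))) := by
  have hv : v = ∑ t, ∑ s, ∑ a, v t s a •
      (Pi.single t (Pi.single s (Pi.single a 1)) : ι → κ → μ → R) := by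
    ext t' s' a'
    simp [Finset.sum_apply, Pi.single_apply, ite_apply, apply_ite]
  conv_lhs => rw [hv]
  simp only [map_sum, map_smul]

section QValue

variable {T S A : ℕ} (P : Fin T → Fin S → Fin S → Fin A → ℝ)
  (ℓ : Fin (T + 1) → Fin S → Fin A → ((Fin (T + 1) → Fin S → Fin A → ℝ) → ℝ))
  (s : Fin S) (a : Fin A) (y : Fin (T + 1) → Fin S → Fin A → ℝ)

theorem Qval_last : Qval P ℓ (Fin.last T) s a y = ℓ (Fin.last T) s a y := by
  simp only [Qval, Fin.val_last, Nat.sub_self, Qaux]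

theorem Qval_castSucc (t : Fin T) :
    Qval P ℓ t.castSucc s a y =
      ℓ t.castSucc s a y + ∑ s', P t s' s a * ⨅ a', Qval P ℓ t.succ s' a' y := by
  have hj : T - t.castSucc.val = (T - t.succ.val) + 1 := by simp; omega
  have ht : T - (T - t.succ.val + 1) = t.val := by simp; omega
  simp only [Qval, hj, Qaux, ht]
  rfl

end QValue

section Feasible

variable {T S A : ℕ} {P : Fin T → Fin S → Fin S → Fin A → ℝ} {p : Fin S → ℝ}
  {y : Fin (T + 1) → Fin S → Fin A → ℝ}

theorem sum_expectation_mul_of_mem_feasibleY (hy : y ∈ feasibleY P p) (t : Fin T)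
    (W : Fin S → ℝ) :
    ∑ s, ∑ a, (∑ s', P t s' s a * W s') * y t.castSucc s a =
      ∑ s', W s' * ∑ a, y t.succ s' a := by
  simp only [hy.2.2, mul_sum, sum_mul]
  refine (sum_congr rfl fun s _ => sum_comm).trans (sum_comm.trans ?_)
  exact sum_congr rfl fun _ _ => sum_congr rfl fun _ _ => sum_congr rfl fun _ _ => by ring

theorem sum_mul_eq_of_mem_feasibleY_of_bellman (hy : y ∈ feasibleY P p)
    (c Q : Fin (T + 1) → Fin S → Fin A → ℝ) (V : Fin (T + 1) → Fin S → ℝ)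
    (hlast : ∀ s a, c (Fin.last T) s a = Q (Fin.last T) s a)
    (hstep : ∀ (t : Fin T) s a,
      c t.castSucc s a + ∑ s', P t s' s a * V t.succ s' = Q t.castSucc s a) :
    ∑ t, ∑ s, ∑ a, c t s a * y t s a =
      ∑ t, ∑ s, ∑ a, (Q t s a - V t s) * y t s a + ∑ s, V 0 s * p s := by
  have hQ : ∑ t, ∑ s, ∑ a, Q t s a * y t s a = ∑ t, ∑ s, ∑ a, c t s a * y t s a +
      ∑ t : Fin T, ∑ s, V t.succ s * ∑ a, y t.succ s a := by
    rw [Fin.sum_univ_castSucc, Fin.sum_univ_castSucc (fun t => ∑ s, ∑ a, c t s a * y t s a)]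
    simp only [← hstep, hlast, add_mul, sum_add_distrib, sum_expectation_mul_of_mem_feasibleY hy]
    ring
  have hV : ∑ t, ∑ s, ∑ a, V t s * y t s a = ∑ s, V 0 s * p s +
      ∑ t : Fin T, ∑ s, V t.succ s * ∑ a, y t.succ s a := by
    simp only [← mul_sum, Fin.sum_univ_succ (fun t => ∑ s, V t s * ∑ a, y t s a), hy.2.1]
  simp only [sub_mul, sum_sub_distrib]
  linarith

end Feasible

theorem sum_sub_iInf_mul_nonneg {ι κ μ : Type*} [Fintype ι] [Fintype κ] [Fintype μ]
    (Q y : ι → κ → μ → ℝ) (hy : ∀ t s a, 0 ≤ y t s a) :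
    0 ≤ ∑ t, ∑ s, ∑ a, (Q t s a - ⨅ a', Q t s a') * y t s a :=
  sum_nonneg fun t _ => sum_nonneg fun s _ => sum_nonneg fun a _ =>
    mul_nonneg (sub_nonneg.2 (ciInf_le (Set.finite_range _).bddBelow a)) (hy t s a)

theorem sum_sub_iInf_mul_eq_zero {ι κ μ : Type*} [Fintype ι] [Fintype κ] [Fintype μ]
    (Q y : ι → κ → μ → ℝ) (hsupp : ∀ t s a, y t s a ≠ 0 → ∀ a', Q t s a ≤ Q t s a') :
    ∑ t, ∑ s, ∑ a, (Q t s a - ⨅ a', Q t s a') * y t s a = 0 := by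
  refine sum_eq_zero fun t _ => sum_eq_zero fun s _ => sum_eq_zero fun a _ => ?_
  by_cases hya : y t s a = 0
  · rw [hya, mul_zero]
  · have : Nonempty μ := ⟨a⟩
    have hmin : Q t s a = ⨅ a', Q t s a' :=
      le_antisymm (le_ciInf (hsupp t s a hya)) (ciInf_le (Set.finite_range _).bddBelow a)
    rw [hmin, sub_self, zero_mul]

theorem stmt_18_general
    (T S A : ℕ)
    (P : Fin T → Fin S → Fin S → Fin A → ℝ)
    (p : Fin S → ℝ)
    (ℓ : Fin (T + 1) → Fin S → Fin A → ((Fin (T + 1) → Fin S → Fin A → ℝ) → ℝ))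
    (F : (Fin (T + 1) → Fin S → Fin A → ℝ) → ℝ)
    (hFconv : ConvexOn ℝ Set.univ F)
    (hFdiff : Differentiable ℝ F)
    (hFgrad : ∀ y t s a,
      fderiv ℝ F y (Pi.single t (Pi.single s (Pi.single a (1 : ℝ)))) = ℓ t s a y)
    (ystar : Fin (T + 1) → Fin S → Fin A → ℝ)
    (hystar : ystar ∈ feasibleY P p)
    (hwardrop : ∀ t s a, 0 < ystar t s a →
      ∀ a', Qval P ℓ t s a ystar ≤ Qval P ℓ t s a' ystar) :
    ∀ y ∈ feasibleY P p, F ystar ≤ F y := by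
  intro y hy
  set Q := fun t s a => Qval P ℓ t s a ystar
  have hcost : ∀ z ∈ feasibleY P p, ∑ t, ∑ s, ∑ a, ℓ t s a ystar * z t s a =
      ∑ t, ∑ s, ∑ a, (Q t s a - ⨅ a', Q t s a') * z t s a + ∑ s, (⨅ a', Q 0 s a') * p s :=
    fun z hz => sum_mul_eq_of_mem_feasibleY_of_bellman hz _ Q (fun t s => ⨅ a', Q t s a')
      (fun s a => (Qval_last P ℓ s a ystar).symm)
      (fun t s a => (Qval_castSucc P ℓ s a ystar t).symm)
  have hgrad : fderiv ℝ F ystar (y - ystar) = ∑ t, ∑ s, ∑ a, ℓ t s a ystar * y t s a -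
      ∑ t, ∑ s, ∑ a, ℓ t s a ystar * ystar t s a := by
    rw [← ContinuousLinearMap.coe_coe, LinearMap.pi_pi_pi_apply_eq_sum_univ]
    simp only [ContinuousLinearMap.coe_coe, hFgrad, Pi.sub_apply, smul_eq_mul, sub_mul,
      sum_sub_distrib, mul_comm (y _ _ _), mul_comm (ystar _ _ _)]
  have hgap : 0 ≤ fderiv ℝ F ystar (y - ystar) := by
    rw [hgrad, hcost y hy, hcost ystar hystar,
      sum_sub_iInf_mul_eq_zero Q ystar fun t s a h => hwardrop t s a ((hystar.1 t s a).lt_of_ne' h)]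
    linarith [sum_sub_iInf_mul_nonneg Q y hy.1]
  linarith [hFconv.add_apply_sub_le_of_hasFDerivAt (hFdiff ystar).hasFDerivAt y]

theorem stmt_18
    (T S A : ℕ) (hS : 1 ≤ S) (hA : 1 ≤ A)
    (P : Fin T → Fin S → Fin S → Fin A → ℝ)
    (hPnonneg : ∀ t s' s a, 0 ≤ P t s' s a)
    (hPsum : ∀ t s a, ∑ s', P t s' s a = 1)
    (p : Fin S → ℝ) (hp : ∀ s, 0 ≤ p s)
    (ℓ : Fin (T + 1) → Fin S → Fin A → ((Fin (T + 1) → Fin S → Fin A → ℝ) → ℝ))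
    (hℓcont : ∀ t s a, Continuous (ℓ t s a))
    (F : (Fin (T + 1) → Fin S → Fin A → ℝ) → ℝ)
    (hFconv : ConvexOn ℝ Set.univ F)
    (hFdiff : Differentiable ℝ F)
    (hFgrad : ∀ y t s a,
      fderiv ℝ F y (Pi.single t (Pi.single s (Pi.single a (1 : ℝ)))) = ℓ t s a y)
    (ystar : Fin (T + 1) → Fin S → Fin A → ℝ)
    (hystar : ystar ∈ feasibleY P p)
    (hwardrop : ∀ t s a, 0 < ystar t s a →
      ∀ a', Qval P ℓ t s a ystar ≤ Qval P ℓ t s a' ystar) :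
    ∀ y ∈ feasibleY P p, F ystar ≤ F y :=
  stmt_18_general T S A P p ℓ F hFconv hFdiff hFgrad ystar hystar hwardrop
end
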